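/- Let P be a polyhedron in a finite-dimensional rational vector space V (an intersection of finitely many closed affine half-spaces), and for each face F of P let N_F P = { y ∈ V* : y attains its minimum over P on F } be its normal cone. Then the collection { N_F P : F a face of P } is a fan in V*: each N_F P is a polyhedral cone, every face of N_F P is again some N_G P, and the intersection of any two cones in the collection is a common face of both. -/

import Mathlib

/-- A polyhedral cone: intersection of finitely many closed half-spaces through the origin. -/
def IsPolyhedralCone {W : Type*} [AddCommGroup W] [Module ℚ W] (P : Set W) : Prop :=
  ∃ s : Finset (Module.Dual ℚ W), P = {x | ∀ l ∈ s, 0 ≤ l x}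

/-- The normal cone of a face `F` of `P`: functionals attaining their minimum over `P` on `F`. -/
def normalCone {W : Type*} [AddCommGroup W] [Module ℚ W] (P F : Set W) :
    Set (Module.Dual ℚ W) :=
  {y | ∀ x ∈ F, ∀ p ∈ P, y x ≤ y p}

/-- A face of a cone `P`: a subset of the form `face_y(P)` for some linear functional `y`. -/
def IsFace {W : Type*} [AddCommGroup W] [Module ℚ W] (P F : Set W) : Prop :=
  ∃ y : Module.Dual ℚ W, F = {x ∈ P | ∀ p ∈ P, y x ≤ y p}

/-- Algebraic relative interior of a convex set. -/
def relint {W : Type*} [AddCommGroup W] [Module ℚ W] (F : Set W) : Set W :=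
  {x ∈ F | ∀ y ∈ F, ∃ ε : ℚ, 0 < ε ∧ x + ε • (x - y) ∈ F}

/-- The linear span `⟨F⟩` of differences of elements of `F`. -/
def spanDiff {W : Type*} [AddCommGroup W] [Module ℚ W] (F : Set W) : Submodule ℚ W :=
  Submodule.span ℚ {v | ∃ x ∈ F, ∃ y ∈ F, v = x - y}

/-- A polyhedron: intersection of finitely many closed affine half-spaces. -/
def IsPolyhedron {W : Type*} [AddCommGroup W] [Module ℚ W] (P : Set W) : Prop :=
  ∃ s : Finset (Module.Dual ℚ W × ℚ), P = {x | ∀ p ∈ s, p.2 ≤ p.1 x}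

/-- A face of a polyhedron `P`: a set of the form `face_y(P)` with the minimum attained. -/
def IsFaceOf {W : Type*} [AddCommGroup W] [Module ℚ W] (P F : Set W) : Prop :=
  ∃ y : Module.Dual ℚ W,
    (∃ x ∈ P, ∀ p ∈ P, y x ≤ y p) ∧ F = {x ∈ P | ∀ p ∈ P, y x ≤ y p}

/-- A face of a cone `C`: cut out by a functional nonnegative on `C`. -/
def IsConeFace {W : Type*} [AddCommGroup W] [Module ℚ W] (C F : Set W) : Prop :=
  ∃ y : Module.Dual ℚ W, (∀ x ∈ C, 0 ≤ y x) ∧ F = {x ∈ C | y x = 0}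

/-!
Every face `F` of `P` contains a point `x` at which only the constraints tight on all of `F` are
tight, so `N_F P = N_x P`; by Farkas' lemma, `N_x P` is the cone generated by the constraints tight
at `x`, which is polyhedral by Weyl's theorem (Fourier–Motzkin elimination). Conversely `N_x P` is
the normal cone of the face cut out by the sum of these constraints. A face `{y ∈ N_x P | y v = 0}`
of `N_x P` is `N_{x + δ v} P` for small `δ > 0`, and `N_x P ∩ N_{x'} P` is the face of `N_x P` cut
out by `x' - x`.
-/

open Module PointedCone Filter Topology

section FourierMotzkin

variable {W : Type*} [AddCommGroup W] [Module ℚ W]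

lemma mem_hull_insert {v x : W} {s : Set W} :
    x ∈ hull ℚ (insert v s) ↔ ∃ c : ℚ, 0 ≤ c ∧ x - c • v ∈ hull ℚ s := by
  rw [Submodule.mem_span_insert]
  constructor
  · rintro ⟨a, z, hz, rfl⟩
    exact ⟨a, a.2, by simpa using hz⟩
  · rintro ⟨c, hc, h⟩
    exact ⟨⟨c, hc⟩, _, h, by simp [Nonneg.mk_smul]⟩

open Classical in
/-- An inequality description of `{c • v + z | 0 ≤ c, ∀ l ∈ u, 0 ≤ l z}`. -/
noncomputable def fourierMotzkin (u : Finset (Dual ℚ W)) (v : W) : Finset (Dual ℚ W) :=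
  u.filter (fun l => 0 ≤ l v) ∪
    ((u.filter (fun l => 0 < l v)) ×ˢ (u.filter (fun l => l v < 0))).image
      fun q => q.1 v • q.2 - q.2 v • q.1

lemma nonneg_of_mem_fourierMotzkin {u : Finset (Dual ℚ W)} {v z : W} {c : ℚ} (hc : 0 ≤ c)
    (hz : ∀ l ∈ u, 0 ≤ l z) : ∀ l ∈ fourierMotzkin u v, 0 ≤ l (c • v + z) := by
  intro l hl
  simp only [fourierMotzkin, Finset.mem_union, Finset.mem_filter, Finset.mem_image,
    Finset.mem_product] at hl
  rcases hl with ⟨hlu, hlv⟩ | ⟨⟨lp, ln⟩, ⟨⟨hp, hpv⟩, hn, hnv⟩, rfl⟩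
  · simp only [map_add, map_smul, smul_eq_mul]
    nlinarith [hz l hlu]
  · simp only [LinearMap.sub_apply, LinearMap.smul_apply, map_add, map_smul, smul_eq_mul]
    nlinarith [hz lp hp, hz ln hn]

lemma exists_smul_le_of_forall_fourierMotzkin {u : Finset (Dual ℚ W)} {v x : W}
    (hx : ∀ l ∈ fourierMotzkin u v, 0 ≤ l x) : ∃ c : ℚ, 0 ≤ c ∧ ∀ l ∈ u, c * l v ≤ l x := by
  classical
  have h₀ : ∀ l ∈ u, 0 ≤ l v → 0 ≤ l x := fun l hl hlv =>
    hx l (by unfold fourierMotzkin; exact Finset.mem_union_left _ (Finset.mem_filter.2 ⟨hl, hlv⟩))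
  have hpair : ∀ lp ∈ u, ∀ ln ∈ u, 0 < lp v → ln v < 0 → 0 ≤ lp v * ln x - ln v * lp x :=
    fun lp hp ln hn hpv hnv => by
      have hmem : lp v • ln - ln v • lp ∈ fourierMotzkin u v := by
        unfold fourierMotzkin
        exact Finset.mem_union_right _ (Finset.mem_image.2 ⟨(lp, ln),
          Finset.mem_product.2 ⟨Finset.mem_filter.2 ⟨hp, hpv⟩, Finset.mem_filter.2 ⟨hn, hnv⟩⟩, rfl⟩)
      simpa using hx _ hmem
  -- `c` is the largest of the lower bounds `0` and `l x / l v` (for `l v < 0`)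
  let lower := insert 0 ((u.filter fun l => l v < 0).image fun l => l x / l v)
  have hlower : lower.Nonempty := Finset.insert_nonempty _ _
  refine ⟨lower.max' hlower, lower.le_max' _ (Finset.mem_insert_self _ _), fun l hl => ?_⟩
  rcases lt_trichotomy (l v) 0 with hlv | hlv | hlv
  · have := lower.le_max' _ (Finset.mem_insert_of_mem
      (Finset.mem_image_of_mem (fun l => l x / l v) (Finset.mem_filter.2 ⟨hl, hlv⟩)))
    rwa [div_le_iff_of_neg hlv] at this
  · simpa [hlv] using h₀ l hl hlv.ge
  · rcases Finset.mem_insert.1 (lower.max'_mem hlower) with hc | hc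
    · simpa [hc] using h₀ l hl hlv.le
    · obtain ⟨ln, hn, hc⟩ := Finset.mem_image.1 hc
      obtain ⟨hn, hnv⟩ := Finset.mem_filter.1 hn
      rw [← hc, div_mul_eq_mul_div, div_le_iff_of_neg hnv]
      linarith [hpair l hl ln hn hlv hnv]

lemma isPolyhedralCone_zero [FiniteDimensional ℚ W] : IsPolyhedralCone ({0} : Set W) := by
  classical
  let b := finBasis ℚ W
  refine ⟨Finset.univ.image b.coord ∪ Finset.univ.image (-b.coord ·),
    Set.ext fun x => ⟨?_, fun h => ?_⟩⟩
  · rintro rfl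
    simp
  · refine b.forall_coord_eq_zero_iff.1 fun i => le_antisymm ?_ ?_
    · simpa using h (-b.coord i) (by simp)
    · exact h (b.coord i) (by simp)

theorem isPolyhedralCone_hull [FiniteDimensional ℚ W] (t : Finset W) :
    IsPolyhedralCone (hull ℚ (t : Set W) : Set W) := by
  classical
  induction t using Finset.induction_on with
  | empty => simpa using isPolyhedralCone_zero
  | insert v t _ ih =>
    obtain ⟨u, hu⟩ := ih
    have hmem : ∀ {z}, z ∈ hull ℚ (t : Set W) ↔ ∀ l ∈ u, 0 ≤ l z := Set.ext_iff.1 hu _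
    refine ⟨fourierMotzkin u v, Set.ext fun x => ?_⟩
    rw [Finset.coe_insert, SetLike.mem_coe, mem_hull_insert, Set.mem_ofPred_eq]
    constructor
    · rintro ⟨c, hc, hx⟩
      simpa using nonneg_of_mem_fourierMotzkin (v := v) hc (hmem.1 hx)
    · intro hx
      obtain ⟨c, hc, hcx⟩ := exists_smul_le_of_forall_fourierMotzkin hx
      refine ⟨c, hc, hmem.2 fun l hl => ?_⟩
      simpa using hcx l hl

theorem exists_dual_neg_of_notMem_hull [FiniteDimensional ℚ W] {t : Finset W} {x : W}
    (hx : x ∉ hull ℚ (t : Set W)) : ∃ l : Dual ℚ W, (∀ m ∈ t, 0 ≤ l m) ∧ l x < 0 := by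
  obtain ⟨u, hu⟩ := isPolyhedralCone_hull t
  have hmem : ∀ {z}, z ∈ hull ℚ (t : Set W) ↔ ∀ l ∈ u, 0 ≤ l z := Set.ext_iff.1 hu _
  obtain ⟨l, hl, hlx⟩ : ∃ l ∈ u, l x < 0 := by simpa [hmem] using hx
  exact ⟨l, fun m hm => hmem.1 (subset_hull hm) l hl, hlx⟩

end FourierMotzkin

section NormalCone

variable {V : Type*} [AddCommGroup V] [Module ℚ V] {P F : Set V}

lemma normalCone_eq_dual (P F : Set V) :
    normalCone P F = dual (Dual.eval ℚ V) (Set.image2 (· - ·) P F) := by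
  ext y
  simp only [normalCone, SetLike.mem_coe, mem_dual, Set.forall_mem_image2, Dual.eval_apply,
    map_sub, sub_nonneg, Set.mem_ofPred_eq]
  exact forall₂_comm

lemma hull_subset_normalCone {A : Set (Dual ℚ V)} (hA : A ⊆ normalCone P F) :
    (hull ℚ A : Set (Dual ℚ V)) ⊆ normalCone P F := by
  rw [normalCone_eq_dual] at hA ⊢
  exact Submodule.span_le.2 hA

lemma mem_normalCone_singleton {x : V} {y : Dual ℚ V} :
    y ∈ normalCone P {x} ↔ ∀ p ∈ P, y x ≤ y p := by
  simp [normalCone]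

lemma normalCone_subset_normalCone_singleton {x : V} (hx : x ∈ F) :
    normalCone P F ⊆ normalCone P {x} :=
  fun _ hy => mem_normalCone_singleton.2 (hy _ hx)

lemma isConeFace_normalCone_singleton_inter {x₁ x₂ : V} (hx₁ : x₁ ∈ P) (hx₂ : x₂ ∈ P) :
    IsConeFace (normalCone P {x₁}) (normalCone P {x₁} ∩ normalCone P {x₂}) := by
  refine ⟨Dual.eval ℚ V (x₂ - x₁), fun y hy => ?_, Set.ext fun y => ?_⟩
  · simpa using mem_normalCone_singleton.1 hy x₂ hx₂
  · simp only [Set.mem_inter_iff, Set.mem_ofPred_eq, mem_normalCone_singleton, map_sub,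
      LinearMap.sub_apply, Dual.eval_apply, sub_eq_zero]
    constructor
    · rintro ⟨h₁, h₂⟩
      exact ⟨h₁, le_antisymm (h₂ x₁ hx₁) (h₁ x₂ hx₂)⟩
    · rintro ⟨h₁, h⟩
      exact ⟨h₁, fun p hp => h ▸ h₁ p hp⟩

lemma exists_isFaceOf_mem_subset_normalCone {x : V} (hx : x ∈ P) {A : Finset (Dual ℚ V)}
    (hA : (A : Set (Dual ℚ V)) ⊆ normalCone P {x}) :
    ∃ G, IsFaceOf P G ∧ x ∈ G ∧ (A : Set (Dual ℚ V)) ⊆ normalCone P G := by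
  have hAx : ∀ a ∈ A, ∀ p ∈ P, a x ≤ a p := fun a ha => mem_normalCone_singleton.1 (hA ha)
  have hsum : ∀ p ∈ P, (∑ a ∈ A, a) x ≤ (∑ a ∈ A, a) p := fun p hp => by
    simpa only [LinearMap.sum_apply] using
      Finset.sum_le_sum fun a ha => hAx a ha p hp
  refine ⟨_, ⟨_, ⟨x, hx, hsum⟩, rfl⟩, ⟨hx, hsum⟩, fun a ha g hg p hp => ?_⟩
  -- on the face, the sum is minimal, and so is each (nonnegative) summand `a g - a x`
  have hzero : ∑ b ∈ A, (b g - b x) = 0 := by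
    have := le_antisymm (hg.2 x hx) (hsum g hg.1)
    simpa only [Finset.sum_sub_distrib, LinearMap.sum_apply, sub_eq_zero]
  have := (Finset.sum_eq_zero_iff_of_nonneg fun b hb => sub_nonneg.2 (hAx b hb g hg.1)).1 hzero a ha
  linarith [hAx a ha p hp]

lemma IsFaceOf.subset (hF : IsFaceOf P F) : F ⊆ P := by
  obtain ⟨y, -, rfl⟩ := hF
  exact Set.sep_subset _ _

lemma IsFaceOf.nonempty (hF : IsFaceOf P F) : F.Nonempty := by
  obtain ⟨y, ⟨x, hx, hmin⟩, rfl⟩ := hF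
  exact ⟨x, hx, hmin⟩

lemma IsFaceOf.convex (hP : Convex ℚ P) (hF : IsFaceOf P F) : Convex ℚ F := by
  obtain ⟨y, -, rfl⟩ := hF
  have : {x | ∀ p ∈ P, y x ≤ y p} = ⋂ p ∈ P, {x | y x ≤ y p} := by ext; simp
  refine hP.inter (s := P) (t := {x | ∀ p ∈ P, y x ≤ y p}) ?_
  rw [this]
  exact convex_iInter₂ fun p _ => convex_halfSpace_le y.isLinear (y p)

end NormalCone

section Polyhedron

variable {V : Type*} [AddCommGroup V] [Module ℚ V]

def polyhedron (s : Finset (Dual ℚ V × ℚ)) : Set V := {x | ∀ q ∈ s, q.2 ≤ q.1 x}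

def activeConstraints (s : Finset (Dual ℚ V × ℚ)) (x : V) : Finset (Dual ℚ V × ℚ) :=
  s.filter fun q => q.1 x = q.2

variable {s : Finset (Dual ℚ V × ℚ)} {x : V} {F : Set V}

lemma convex_polyhedron (s : Finset (Dual ℚ V × ℚ)) : Convex ℚ (polyhedron s) := by
  have : polyhedron s = ⋂ q ∈ s, {x : V | q.2 ≤ q.1 x} := by ext; simp [polyhedron]
  exact this ▸ convex_iInter₂ fun q _ => convex_halfSpace_ge q.1.isLinear q.2

lemma fst_activeConstraints_subset_normalCone :
    Prod.fst '' (activeConstraints s x : Set (Dual ℚ V × ℚ)) ⊆ normalCone (polyhedron s) {x} := by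
  rintro _ ⟨q, hq, rfl⟩
  obtain ⟨-, hqx⟩ := Finset.mem_filter.1 hq
  exact mem_normalCone_singleton.2 fun p hp => hqx ▸ hp q (Finset.mem_filter.1 hq).1

lemma exists_pos_add_smul_mem_polyhedron (hx : x ∈ polyhedron s) {v : V}
    (hv : ∀ q ∈ activeConstraints s x, 0 ≤ q.1 v) :
    ∃ δ : ℚ, 0 < δ ∧ x + δ • v ∈ polyhedron s ∧
      activeConstraints s (x + δ • v) ⊆ activeConstraints s x := by
  have h : ∀ q ∈ s, ∀ᶠ δ in 𝓝[>] (0 : ℚ),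
      q.2 ≤ q.1 (x + δ • v) ∧ (q.1 (x + δ • v) = q.2 → q.1 x = q.2) := by
    intro q hq
    rcases (hx q hq).eq_or_lt with hqx | hqx
    · filter_upwards [self_mem_nhdsWithin] with δ hδ
      have := hv q (Finset.mem_filter.2 ⟨hq, hqx.symm⟩)
      simp only [map_add, map_smul, smul_eq_mul]
      exact ⟨by nlinarith [Set.mem_Ioi.1 hδ], fun _ => hqx.symm⟩
    · have hcont : Tendsto (fun δ : ℚ => q.1 (x + δ • v)) (𝓝[>] 0) (𝓝 (q.1 x)) := by
        simp only [map_add, map_smul, smul_eq_mul]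
        exact tendsto_nhdsWithin_of_tendsto_nhds
          ((continuous_const.add (continuous_id.mul continuous_const)).tendsto' _ _ (by simp))
      filter_upwards [hcont.eventually (lt_mem_nhds hqx)] with δ hδ
      exact ⟨hδ.le, fun h => absurd h hδ.ne'⟩
  obtain ⟨δ, hδ, hδpos⟩ := (((eventually_all_finset s).2 h).and self_mem_nhdsWithin).exists
  refine ⟨δ, hδpos, fun q hq => (hδ q hq).1, fun q hq => ?_⟩
  obtain ⟨hqs, hqx⟩ := Finset.mem_filter.1 hq
  exact Finset.mem_filter.2 ⟨hqs, (hδ q hqs).2 hqx⟩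

theorem normalCone_singleton_eq_hull [FiniteDimensional ℚ V] (hx : x ∈ polyhedron s) :
    normalCone (polyhedron s) {x} =
      hull ℚ (Prod.fst '' (activeConstraints s x : Set (Dual ℚ V × ℚ))) := by
  classical
  refine subset_antisymm (fun y hy => ?_)
    (hull_subset_normalCone fst_activeConstraints_subset_normalCone)
  by_contra hyA
  rw [← Finset.coe_image] at hyA
  obtain ⟨ψ, hψ, hψy⟩ := exists_dual_neg_of_notMem_hull hyA
  obtain ⟨δ, hδ, hxδ, -⟩ := exists_pos_add_smul_mem_polyhedron hx
    (v := (evalEquiv ℚ V).symm ψ) fun q hq => by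
      simpa using hψ q.1 (Finset.mem_image_of_mem _ hq)
  have := mem_normalCone_singleton.1 hy _ hxδ
  simp only [map_add, map_smul, smul_eq_mul, apply_evalEquiv_symm_apply] at this
  nlinarith

lemma exists_mem_activeConstraints_subset (hFP : F ⊆ polyhedron s) (hF : Convex ℚ F)
    (hne : F.Nonempty) : ∃ x ∈ F, ∀ p ∈ F, activeConstraints s x ⊆ activeConstraints s p := by
  -- `x` has the fewest tight constraints; otherwise a midpoint of `x` and `p` would have fewer
  let tight : V → ℕ := fun x => (activeConstraints s x).card
  set x := Function.argminOn tight F hne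
  have hxF : x ∈ F := Function.argminOn_mem tight F hne
  refine ⟨x, hxF, fun p hp => ?_⟩
  by_contra hxp
  obtain ⟨q, hqx, hqp⟩ := Finset.not_subset.1 hxp
  set m := (1 / 2 : ℚ) • x + (1 / 2 : ℚ) • p
  have hmF : m ∈ F := hF hxF hp (by norm_num) (by norm_num) (by norm_num)
  have hm : ∀ r ∈ s, r.1 m = r.2 → r.1 x = r.2 ∧ r.1 p = r.2 := fun r hr hrm => by
    have := hFP hxF r hr
    have := hFP hp r hr
    simp only [m, map_add, map_smul, smul_eq_mul] at hrm
    constructor <;> linarith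
  have hsub : activeConstraints s m ⊂ activeConstraints s x := by
    refine Finset.ssubset_iff_of_subset (fun r hr => ?_) |>.2 ⟨q, hqx, fun hqm => ?_⟩
    · obtain ⟨hrs, hrm⟩ := Finset.mem_filter.1 hr
      exact Finset.mem_filter.2 ⟨hrs, (hm r hrs hrm).1⟩
    · obtain ⟨hqs, hqm⟩ := Finset.mem_filter.1 hqm
      exact hqp (Finset.mem_filter.2 ⟨hqs, (hm q hqs hqm).2⟩)
  exact Function.not_lt_argminOn tight F hmF (Finset.card_lt_card hsub)

theorem exists_mem_normalCone_eq_singleton [FiniteDimensional ℚ V] (hFP : F ⊆ polyhedron s)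
    (hF : Convex ℚ F) (hne : F.Nonempty) :
    ∃ x ∈ F, normalCone (polyhedron s) F = normalCone (polyhedron s) {x} := by
  obtain ⟨x, hxF, hx⟩ := exists_mem_activeConstraints_subset hFP hF hne
  refine ⟨x, hxF, subset_antisymm (normalCone_subset_normalCone_singleton hxF) ?_⟩
  rw [normalCone_singleton_eq_hull (hFP hxF)]
  refine hull_subset_normalCone ?_
  rintro _ ⟨q, hq, rfl⟩ p hp p' hp'
  obtain ⟨hqs, hqp⟩ := Finset.mem_filter.1 (hx p hp hq)
  exact hqp ▸ hp' q hqs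

theorem exists_isFaceOf_normalCone_eq_singleton [FiniteDimensional ℚ V]
    (hx : x ∈ polyhedron s) : ∃ G, IsFaceOf (polyhedron s) G ∧
      normalCone (polyhedron s) G = normalCone (polyhedron s) {x} := by
  classical
  obtain ⟨G, hG, hxG, hAG⟩ := exists_isFaceOf_mem_subset_normalCone hx
    (A := (activeConstraints s x).image Prod.fst)
    (by simpa using fst_activeConstraints_subset_normalCone)
  refine ⟨G, hG, subset_antisymm (normalCone_subset_normalCone_singleton hxG) ?_⟩
  rw [normalCone_singleton_eq_hull hx]
  exact hull_subset_normalCone (by simpa using hAG)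

theorem exists_normalCone_singleton_eq_of_isConeFace [FiniteDimensional ℚ V]
    (hx : x ∈ polyhedron s) {C : Set (Dual ℚ V)}
    (hC : IsConeFace (normalCone (polyhedron s) {x}) C) :
    ∃ x' ∈ polyhedron s, C = normalCone (polyhedron s) {x'} := by
  obtain ⟨φ, hφ, rfl⟩ := hC
  -- the face is the normal cone at `x + δ • v` for small `δ > 0`, where `φ = ⟨v, ·⟩`
  set v := (evalEquiv ℚ V).symm φ
  have hφv : ∀ y : Dual ℚ V, φ y = y v := fun y => (apply_evalEquiv_symm_apply ℚ V y φ).symm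
  obtain ⟨δ, hδ, hx', hact⟩ := exists_pos_add_smul_mem_polyhedron hx (v := v) fun q hq =>
    hφv q.1 ▸ hφ _ (fst_activeConstraints_subset_normalCone ⟨q, hq, rfl⟩)
  refine ⟨x + δ • v, hx', subset_antisymm ?_ ?_⟩
  · rintro y ⟨hy, hyφ⟩
    rw [mem_normalCone_singleton] at hy ⊢
    simpa [← hφv, hyφ] using hy
  · rw [normalCone_singleton_eq_hull hx']
    have hgen : ∀ q ∈ activeConstraints s (x + δ • v),
        q.1 ∈ normalCone (polyhedron s) {x} ∧ φ q.1 = 0 := fun q hq => by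
      obtain ⟨-, hqx'⟩ := Finset.mem_filter.1 hq
      obtain ⟨-, hqx⟩ := Finset.mem_filter.1 (hact hq)
      refine ⟨fst_activeConstraints_subset_normalCone ⟨q, hact hq, rfl⟩, ?_⟩
      simp only [map_add, map_smul, smul_eq_mul, hqx, add_eq_left, mul_eq_zero] at hqx'
      exact (hφv q.1).trans (hqx'.resolve_left hδ.ne')
    intro y hy
    refine ⟨hull_subset_normalCone ?_ hy, ?_⟩
    · rintro _ ⟨q, hq, rfl⟩
      exact (hgen q hq).1
    · have hker : Prod.fst '' (activeConstraints s (x + δ • v) : Set (Dual ℚ V × ℚ)) ⊆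
          LinearMap.ker φ := by
        rintro _ ⟨q, hq, rfl⟩
        exact (hgen q hq).2
      exact Submodule.span_le.2 hker (hull_le_span ℚ _ hy)

end Polyhedron

theorem normal_fan_is_fan_general
    (V : Type*) [AddCommGroup V] [Module ℚ V] [FiniteDimensional ℚ V]
    (P : Set V) (hP : IsPolyhedron P) :
    (∀ F : Set V, IsFaceOf P F → IsPolyhedralCone (normalCone P F)) ∧
    (∀ F : Set V, IsFaceOf P F → ∀ C : Set (Module.Dual ℚ V),
      IsConeFace (normalCone P F) C → ∃ G : Set V, IsFaceOf P G ∧ C = normalCone P G) ∧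
    (∀ F G : Set V, IsFaceOf P F → IsFaceOf P G →
      IsConeFace (normalCone P F) (normalCone P F ∩ normalCone P G) ∧
      IsConeFace (normalCone P G) (normalCone P F ∩ normalCone P G)) := by
  classical
  obtain ⟨s, rfl⟩ : ∃ s, P = polyhedron s := hP
  have hpoint : ∀ F, IsFaceOf (polyhedron s) F →
      ∃ x ∈ polyhedron s, normalCone (polyhedron s) F = normalCone (polyhedron s) {x} :=
    fun F hF => (exists_mem_normalCone_eq_singleton hF.subset
      (hF.convex (convex_polyhedron s)) hF.nonempty).imp fun x hx => ⟨hF.subset hx.1, hx.2⟩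
  refine ⟨fun F hF => ?_, fun F hF C hC => ?_, fun F G hF hG => ?_⟩
  · obtain ⟨x, hx, hFx⟩ := hpoint F hF
    rw [hFx, normalCone_singleton_eq_hull hx, ← Finset.coe_image]
    exact isPolyhedralCone_hull _
  · obtain ⟨x, hx, hFx⟩ := hpoint F hF
    obtain ⟨x', hx', rfl⟩ := exists_normalCone_singleton_eq_of_isConeFace hx (hFx ▸ hC)
    obtain ⟨G, hG, hGx'⟩ := exists_isFaceOf_normalCone_eq_singleton hx'
    exact ⟨G, hG, hGx'.symm⟩
  · obtain ⟨x, hx, hFx⟩ := hpoint F hF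
    obtain ⟨y, hy, hGy⟩ := hpoint G hG
    rw [hFx, hGy]
    exact ⟨isConeFace_normalCone_singleton_inter hx hy,
      Set.inter_comm (normalCone _ {x}) _ ▸ isConeFace_normalCone_singleton_inter hy hx⟩

/-- The collection of normal cones `N_F P` of the faces of a polyhedron `P` forms a fan:
each normal cone is a polyhedral cone, every face of a normal cone is again a normal cone
of a face of `P`, and the intersection of two normal cones is a common face of both. -/
theorem normal_fan_is_fan
    (V : Type*) [AddCommGroup V] [Module ℚ V] [FiniteDimensional ℚ V]
    (P : Set V) (hP : IsPolyhedron P) (hne : P.Nonempty) :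
    (∀ F : Set V, IsFaceOf P F → IsPolyhedralCone (normalCone P F)) ∧
    (∀ F : Set V, IsFaceOf P F → ∀ C : Set (Module.Dual ℚ V),
      IsConeFace (normalCone P F) C → ∃ G : Set V, IsFaceOf P G ∧ C = normalCone P G) ∧
    (∀ F G : Set V, IsFaceOf P F → IsFaceOf P G →
      IsConeFace (normalCone P F) (normalCone P F ∩ normalCone P G) ∧
      IsConeFace (normalCone P G) (normalCone P F ∩ normalCone P G)) :=
  normal_fan_is_fan_general V P hP
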